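/- arXiv:2503.20917 — 2 statements merged into one kernel-verified Lean document; each statement's English description precedes it below -/
import Mathlib

section
/- Two roots in the sign-change interval: let h ∈ {1, …, c−1} and suppose d_i ≤ 0 for all i ≤ h, d_i ≥ 0 for all i > h, with d_h < 0 and d_{h+1} > 0, and let V_min denote the minimum of g over (α_h, α_{h+1}) (which is attained at a unique point γ*). If V > V_min, then the equation g(γ) = V has exactly two solutions in (α_h, α_{h+1}); if V = V_min, it has exactly one solution there (namely γ*); if V < V_min, it has none. -/
open Filter Set Topology

private lemma hasDerivAt_div_lin (s k x : ℝ) (hs : s ≠ x) :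
    HasDerivAt (fun γ : ℝ => k / (s - γ)) (k / (s - x) ^ 2) x := by
  have h0 : s - x ≠ 0 := sub_ne_zero.2 hs
  have h1 : HasDerivAt (fun γ : ℝ => s - γ) (-1) x := (hasDerivAt_id x).const_sub s
  have h2 := (h1.inv h0).const_mul k
  have h3 : (fun γ : ℝ => k / (s - γ)) = fun γ : ℝ => k * (s - γ)⁻¹ := by
    funext γ; rw [div_eq_mul_inv]
  rw [h3]
  refine h2.congr_deriv ?_
  field_simp

private lemma hasDerivAt_div_sq (s k x : ℝ) (hs : s ≠ x) :
    HasDerivAt (fun γ : ℝ => k / (s - γ) ^ 2) (2 * k / (s - x) ^ 3) x := by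
  have h0 : s - x ≠ 0 := sub_ne_zero.2 hs
  have h1 : HasDerivAt (fun γ : ℝ => s - γ) (-1) x := (hasDerivAt_id x).const_sub s
  have h2 := ((h1.pow 2).inv (pow_ne_zero 2 h0)).const_mul k
  have h3 : (fun γ : ℝ => k / (s - γ) ^ 2) = fun γ : ℝ => k * ((s - γ) ^ 2)⁻¹ := by
    funext γ; rw [div_eq_mul_inv]
  rw [h3]
  refine h2.congr_deriv ?_
  simp only [Pi.pow_apply]
  field_simp
  ring

private lemma no_three_roots {s : Set ℝ} {f : ℝ → ℝ} (hconv : StrictConvexOn ℝ s f)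
    {x y z V : ℝ} (hx : x ∈ s) (hz : z ∈ s) (hxy : x < y) (hyz : y < z)
    (hfx : f x = V) (hfy : f y = V) (hfz : f z = V) : False := by
  have hxz : x < z := hxy.trans hyz
  have hzx : (0:ℝ) < z - x := by linarith
  set t : ℝ := (z - y) / (z - x) with ht
  have ht0 : 0 < t := div_pos (by linarith) hzx
  have ht1 : 0 < 1 - t := by
    have : t < 1 := (div_lt_one hzx).2 (by linarith)
    linarith
  have hsum : t + (1 - t) = 1 := by ring
  have hyeq : t • x + (1 - t) • z = y := by
    rw [smul_eq_mul, smul_eq_mul, ht]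
    field_simp
    ring
  have hlt := hconv.2 hx hz (ne_of_lt hxz) ht0 ht1 hsum
  rw [hyeq, hfx, hfy, hfz] at hlt
  have : t * V + (1 - t) * V = V := by ring
  rw [smul_eq_mul, smul_eq_mul, this] at hlt
  exact lt_irrefl V hlt

/-- The section function `g(γ) = ∑_{i=1}^c α_i d_i / (α_i − γ)`. -/
noncomputable def secFun (c : ℕ) (α d : ℕ → ℝ) (γ : ℝ) : ℝ :=
  ∑ i ∈ Finset.Icc 1 c, α i * d i / (α i - γ)

/-- let `V_min = g(γ*)` be the minimum of `g` over the sign-change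
interval `(α_h, α_{h+1})`, attained at the unique point `γ*`. Then `g(γ) = V`
has exactly two solutions in the interval if `V > V_min`, exactly one (namely
`γ*`) if `V = V_min`, and none if `V < V_min`. -/
theorem two_roots_in_sign_change_interval
    (c : ℕ) (hc : 2 ≤ c) (α d : ℕ → ℝ)
    (hpos : ∀ i ∈ Finset.Icc 1 c, 0 < α i)
    (hmono : ∀ i ∈ Finset.Icc 1 c, ∀ j ∈ Finset.Icc 1 c, i < j → α i < α j)
    (h : ℕ) (hh1 : 1 ≤ h) (hh2 : h ≤ c - 1)
    (hdneg : ∀ i ∈ Finset.Icc 1 h, d i ≤ 0)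
    (hdpos : ∀ i ∈ Finset.Icc (h + 1) c, 0 ≤ d i)
    (hdh : d h < 0) (hdh1 : 0 < d (h + 1))
    (γstar : ℝ) (hγstar : γstar ∈ Set.Ioo (α h) (α (h + 1)))
    (hmin : ∀ γ ∈ Set.Ioo (α h) (α (h + 1)), secFun c α d γstar ≤ secFun c α d γ)
    (huniq : ∀ γ ∈ Set.Ioo (α h) (α (h + 1)),
      (∀ γ' ∈ Set.Ioo (α h) (α (h + 1)), secFun c α d γ ≤ secFun c α d γ') → γ = γstar)
    (V : ℝ) :
    (secFun c α d γstar < V →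
      ∃ γ₁ γ₂ : ℝ, γ₁ ≠ γ₂ ∧
        {γ : ℝ | γ ∈ Set.Ioo (α h) (α (h + 1)) ∧ secFun c α d γ = V} = {γ₁, γ₂}) ∧
    (V = secFun c α d γstar →
      {γ : ℝ | γ ∈ Set.Ioo (α h) (α (h + 1)) ∧ secFun c α d γ = V} = {γstar}) ∧
    (V < secFun c α d γstar →
      {γ : ℝ | γ ∈ Set.Ioo (α h) (α (h + 1)) ∧ secFun c α d γ = V} = ∅) := by
  classical
  set f := secFun c α d with hfdef
  set a := α h with hadef
  set b := α (h + 1) with hbdef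
  have hhc : h ∈ Finset.Icc 1 c := Finset.mem_Icc.2 ⟨hh1, by omega⟩
  have hh1c : h + 1 ∈ Finset.Icc 1 c := Finset.mem_Icc.2 ⟨by omega, by omega⟩
  have hab : a < b := hmono h hhc (h + 1) hh1c (Nat.lt_succ_self h)
  -- case analysis on indices
  have hcase : ∀ i ∈ Finset.Icc 1 c, (α i ≤ a ∧ d i ≤ 0) ∨ (b ≤ α i ∧ 0 ≤ d i) := by
    intro i hi
    have hi' := Finset.mem_Icc.1 hi
    rcases le_or_gt i h with hih | hih
    · left
      refine ⟨?_, hdneg i (Finset.mem_Icc.2 ⟨hi'.1, hih⟩)⟩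
      rcases eq_or_lt_of_le hih with rfl | hlt
      · exact le_rfl
      · exact (hmono i hi h hhc hlt).le
    · right
      refine ⟨?_, hdpos i (Finset.mem_Icc.2 ⟨hih, hi'.2⟩)⟩
      rcases eq_or_lt_of_le (Nat.succ_le_of_lt hih) with heq | hlt
      · exact le_of_eq (congrArg α heq)
      · exact (hmono (h + 1) hh1c i hi hlt).le
  have hne : ∀ x ∈ Set.Ioo a b, ∀ i ∈ Finset.Icc 1 c, α i ≠ x := by
    intro x hx i hi
    rcases hcase i hi with ⟨hle, _⟩ | ⟨hle, _⟩
    · exact ne_of_lt (lt_of_le_of_lt hle hx.1)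
    · exact ne_of_gt (lt_of_lt_of_le hx.2 hle)
  -- first derivative
  set f1 : ℝ → ℝ := fun γ => ∑ i ∈ Finset.Icc 1 c, α i * d i / (α i - γ) ^ 2 with hf1def
  set f2 : ℝ → ℝ := fun γ => ∑ i ∈ Finset.Icc 1 c, 2 * (α i * d i) / (α i - γ) ^ 3 with hf2def
  have hder : ∀ x ∈ Set.Ioo a b, HasDerivAt f (f1 x) x := by
    intro x hx
    exact HasDerivAt.fun_sum (fun i hi => hasDerivAt_div_lin (α i) (α i * d i) x (hne x hx i hi))
  have hder1 : ∀ x ∈ Set.Ioo a b, HasDerivAt f1 (f2 x) x := by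
    intro x hx
    exact HasDerivAt.fun_sum (fun i hi => hasDerivAt_div_sq (α i) (α i * d i) x (hne x hx i hi))
  have hcont : ContinuousOn f (Set.Ioo a b) :=
    fun x hx => (hder x hx).continuousAt.continuousWithinAt
  -- positivity of the second derivative
  have hpos2 : ∀ x ∈ Set.Ioo a b, 0 < f2 x := by
    intro x hx
    apply Finset.sum_pos'
    · intro i hi
      rcases hcase i hi with ⟨hle, hd⟩ | ⟨hle, hd⟩
      · have hcube : (α i - x) ^ 3 < 0 :=
          Odd.pow_neg (⟨1, by norm_num⟩) (by linarith [hx.1])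
        have hnum : 2 * (α i * d i) ≤ 0 := by nlinarith [hpos i hi]
        exact div_nonneg_of_nonpos hnum hcube.le
      · have hcube : (0:ℝ) < (α i - x) ^ 3 := by
          have : (0:ℝ) < α i - x := by linarith [hx.2]
          positivity
        have hnum : 0 ≤ 2 * (α i * d i) := by nlinarith [hpos i hi]
        exact div_nonneg hnum hcube.le
    · refine ⟨h, hhc, ?_⟩
      have hcube : (a - x) ^ 3 < 0 := Odd.pow_neg (⟨1, by norm_num⟩) (by linarith [hx.1])
      have hnum : 2 * (α h * d h) < 0 := by nlinarith [hpos h hhc]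
      exact div_pos_of_neg_of_neg hnum hcube
  -- strict convexity
  have hconv : StrictConvexOn ℝ (Set.Ioo a b) f := by
    apply strictConvexOn_of_deriv2_pos (convex_Ioo a b) hcont
    intro x hx
    rw [interior_Ioo] at hx
    have e1 : deriv f =ᶠ[𝓝 x] f1 := by
      filter_upwards [isOpen_Ioo.mem_nhds hx] with y hy
      exact (hder y hy).deriv
    have e2 : (deriv^[2] f) x = f2 x := by
      have : (deriv^[2] f) x = deriv (deriv f) x := by
        simp [Function.iterate_succ_apply']
      rw [this, e1.deriv_eq, (hder1 x hx).deriv]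
    rw [e2]
    exact hpos2 x hx
  -- blow-up at the left endpoint
  have hsplit : ∀ γ : ℝ, f γ =
      α h * d h / (a - γ) + ∑ i ∈ (Finset.Icc 1 c).erase h, α i * d i / (α i - γ) := by
    intro γ
    exact (Finset.add_sum_erase _ (fun i => α i * d i / (α i - γ)) hhc).symm
  have hsplit' : ∀ γ : ℝ, f γ =
      α (h+1) * d (h+1) / (b - γ) + ∑ i ∈ (Finset.Icc 1 c).erase (h+1), α i * d i / (α i - γ) := by
    intro γ
    exact (Finset.add_sum_erase _ (fun i => α i * d i / (α i - γ)) hh1c).symm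
  have hrest : ∀ (j : ℕ) (p : ℝ), (∀ i ∈ (Finset.Icc 1 c).erase j, α i ≠ p) →
      ContinuousAt (fun γ : ℝ => ∑ i ∈ (Finset.Icc 1 c).erase j, α i * d i / (α i - γ)) p := by
    intro j p hnep
    exact tendsto_finset_sum _ (fun i hi => ContinuousAt.div continuousAt_const
      ((continuous_const.sub continuous_id).continuousAt)
      (sub_ne_zero.2 (hnep i hi)))
  have hlow : ∀ i ∈ Finset.Icc 1 c, i ≤ h → α i ≤ a := by
    intro i hi hle
    rcases Nat.eq_or_lt_of_le hle with rfl | hlt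
    · exact le_rfl
    · exact (hmono i hi h hhc hlt).le
  have hhigh : ∀ i ∈ Finset.Icc 1 c, h < i → b ≤ α i := by
    intro i hi hlt
    rcases Nat.eq_or_lt_of_le (Nat.succ_le_of_lt hlt) with heq | hlt'
    · exact le_of_eq (congrArg α heq)
    · exact (hmono (h + 1) hh1c i hi hlt').le
  have hneh : ∀ i ∈ (Finset.Icc 1 c).erase h, α i ≠ a := by
    intro i hi
    obtain ⟨hne', hi2⟩ := Finset.mem_erase.1 hi
    rcases lt_trichotomy i h with hlt | heq | hlt
    · exact ne_of_lt (hmono i hi2 h hhc hlt)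
    · exact absurd heq hne'
    · exact ne_of_gt (lt_of_lt_of_le hab (hhigh i hi2 hlt))
  have hneh1 : ∀ i ∈ (Finset.Icc 1 c).erase (h + 1), α i ≠ b := by
    intro i hi
    obtain ⟨hne', hi2⟩ := Finset.mem_erase.1 hi
    rcases lt_trichotomy i (h + 1) with hlt | heq | hlt
    · exact ne_of_lt (lt_of_le_of_lt (hlow i hi2 (Nat.lt_succ_iff.1 hlt)) hab)
    · exact absurd heq hne'
    · exact ne_of_gt (hmono (h + 1) hh1c i hi2 hlt)
  have htda : Tendsto f (𝓝[>] a) atTop := by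
    have hC : 0 < -(α h * d h) := by nlinarith [hpos h hhc]
    have h2 : Tendsto (fun γ : ℝ => γ - a) (𝓝[>] a) (𝓝[>] 0) := by
      apply tendsto_nhdsWithin_of_tendsto_nhds_of_eventually_within
      · have : Tendsto (fun γ : ℝ => γ - a) (𝓝 a) (𝓝 0) := by
          simpa using (continuous_sub_right a).tendsto a
        exact this.mono_left nhdsWithin_le_nhds
      · filter_upwards [self_mem_nhdsWithin] with y hy
        exact Set.mem_Ioi.2 (sub_pos.2 (Set.mem_Ioi.1 hy))
    have h3 := tendsto_inv_nhdsGT_zero.comp h2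
    have h4 := h3.const_mul_atTop hC
    have h1 : Tendsto (fun γ : ℝ => α h * d h / (a - γ)) (𝓝[>] a) atTop := by
      apply h4.congr'
      filter_upwards [self_mem_nhdsWithin] with y hy
      have hya : y - a ≠ 0 := ne_of_gt (sub_pos.2 hy)
      show -(α h * d h) * (y - a)⁻¹ = α h * d h / (a - y)
      rw [div_eq_mul_inv, show a - y = -(y - a) by ring, inv_neg]
      ring
    have h5 : Tendsto (fun γ : ℝ => ∑ i ∈ (Finset.Icc 1 c).erase h, α i * d i / (α i - γ))
        (𝓝[>] a) (𝓝 (∑ i ∈ (Finset.Icc 1 c).erase h, α i * d i / (α i - a))) :=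
      ((hrest h a hneh).tendsto).mono_left nhdsWithin_le_nhds
    have := h1.atTop_add h5
    exact this.congr (fun γ => (hsplit γ).symm)
  have htdb : Tendsto f (𝓝[<] b) atTop := by
    have hC : 0 < α (h+1) * d (h+1) := by nlinarith [hpos (h+1) hh1c]
    have h2 : Tendsto (fun γ : ℝ => b - γ) (𝓝[<] b) (𝓝[>] 0) := by
      apply tendsto_nhdsWithin_of_tendsto_nhds_of_eventually_within
      · have : Tendsto (fun γ : ℝ => b - γ) (𝓝 b) (𝓝 0) := by
          simpa using (continuous_sub_left b).tendsto b
        exact this.mono_left nhdsWithin_le_nhds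
      · filter_upwards [self_mem_nhdsWithin] with y hy
        exact Set.mem_Ioi.2 (sub_pos.2 (Set.mem_Iio.1 hy))
    have h3 := tendsto_inv_nhdsGT_zero.comp h2
    have h4 := h3.const_mul_atTop hC
    have h1 : Tendsto (fun γ : ℝ => α (h+1) * d (h+1) / (b - γ)) (𝓝[<] b) atTop := by
      apply h4.congr'
      filter_upwards [self_mem_nhdsWithin] with y hy
      have hyb : b - y ≠ 0 := ne_of_gt (sub_pos.2 hy)
      show α (h+1) * d (h+1) * (b - y)⁻¹ = α (h+1) * d (h+1) / (b - y)
      rw [div_eq_mul_inv]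
    have h5 : Tendsto (fun γ : ℝ => ∑ i ∈ (Finset.Icc 1 c).erase (h+1), α i * d i / (α i - γ))
        (𝓝[<] b) (𝓝 (∑ i ∈ (Finset.Icc 1 c).erase (h+1), α i * d i / (α i - b))) :=
      ((hrest (h+1) b hneh1).tendsto).mono_left nhdsWithin_le_nhds
    have := h1.atTop_add h5
    exact this.congr (fun γ => (hsplit' γ).symm)
  refine ⟨?_, ?_, ?_⟩
  · -- two roots
    intro hV
    obtain ⟨x₁, hx₁, hVx₁⟩ : ∃ x ∈ Set.Ioo a γstar, V < f x := by
      have hev : ∀ᶠ x in 𝓝[>] a, V < f x := htda.eventually_gt_atTop V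
      have hev2 : ∀ᶠ x in 𝓝[>] a, x ∈ Set.Ioo a γstar :=
        eventually_of_mem (Ioo_mem_nhdsGT_of_mem ⟨le_rfl, hγstar.1⟩) (fun x hx => hx)
      obtain ⟨x, hVx, hx⟩ := (hev.and hev2).exists
      exact ⟨x, hx, hVx⟩
    obtain ⟨x₂, hx₂, hVx₂⟩ : ∃ x ∈ Set.Ioo γstar b, V < f x := by
      have hev : ∀ᶠ x in 𝓝[<] b, V < f x := htdb.eventually_gt_atTop V
      have hev2 : ∀ᶠ x in 𝓝[<] b, x ∈ Set.Ioo γstar b :=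
        eventually_of_mem (Ioo_mem_nhdsLT_of_mem ⟨hγstar.2, le_rfl⟩) (fun x hx => hx)
      obtain ⟨x, hVx, hx⟩ := (hev.and hev2).exists
      exact ⟨x, hx, hVx⟩
    have hsub1 : Set.Icc x₁ γstar ⊆ Set.Ioo a b :=
      fun y hy => ⟨lt_of_lt_of_le hx₁.1 hy.1, lt_of_le_of_lt hy.2 hγstar.2⟩
    have hsub2 : Set.Icc γstar x₂ ⊆ Set.Ioo a b :=
      fun y hy => ⟨lt_of_lt_of_le hγstar.1 hy.1, lt_of_le_of_lt hy.2 hx₂.2⟩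
    obtain ⟨γ₁, hγ₁mem, hγ₁V⟩ : ∃ γ₁ ∈ Set.Icc x₁ γstar, f γ₁ = V := by
      have := intermediate_value_Icc' hx₁.2.le (hcont.mono hsub1)
      obtain ⟨γ₁, hmem, hfe⟩ := this ⟨hV.le, hVx₁.le⟩
      exact ⟨γ₁, hmem, hfe⟩
    obtain ⟨γ₂, hγ₂mem, hγ₂V⟩ : ∃ γ₂ ∈ Set.Icc γstar x₂, f γ₂ = V := by
      have := intermediate_value_Icc hx₂.1.le (hcont.mono hsub2)
      obtain ⟨γ₂, hmem, hfe⟩ := this ⟨hV.le, hVx₂.le⟩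
      exact ⟨γ₂, hmem, hfe⟩
    have hγ₁I : γ₁ ∈ Set.Ioo a b := hsub1 hγ₁mem
    have hγ₂I : γ₂ ∈ Set.Ioo a b := hsub2 hγ₂mem
    have hγ₁lt : γ₁ < γstar := lt_of_le_of_ne hγ₁mem.2 (by rintro rfl; exact absurd hγ₁V (ne_of_lt hV))
    have hγ₂gt : γstar < γ₂ := lt_of_le_of_ne hγ₂mem.1 (by rintro rfl; exact absurd hγ₂V (ne_of_lt hV))
    have hγ₁₂ : γ₁ < γ₂ := hγ₁lt.trans hγ₂gt
    refine ⟨γ₁, γ₂, ne_of_lt hγ₁₂, ?_⟩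
    ext γ
    simp only [Set.mem_setOf_eq, Set.mem_insert_iff, Set.mem_singleton_iff]
    constructor
    · rintro ⟨hγI, hγV⟩
      by_contra hcon
      push_neg at hcon
      obtain ⟨hne1, hne2⟩ := hcon
      rcases lt_trichotomy γ γ₁ with h1 | h1 | h1
      · exact no_three_roots hconv hγI hγ₂I h1 hγ₁₂ hγV hγ₁V hγ₂V
      · exact hne1 h1
      · rcases lt_trichotomy γ γ₂ with h2 | h2 | h2
        · exact no_three_roots hconv hγ₁I hγ₂I h1 h2 hγ₁V hγV hγ₂V
        · exact hne2 h2
        · exact no_three_roots hconv hγ₁I hγI hγ₁₂ h2 hγ₁V hγ₂V hγV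
    · rintro (rfl | rfl)
      · exact ⟨hγ₁I, hγ₁V⟩
      · exact ⟨hγ₂I, hγ₂V⟩
  · -- one root
    intro hVeq
    ext γ
    simp only [Set.mem_setOf_eq, Set.mem_singleton_iff]
    constructor
    · rintro ⟨hγI, hγV⟩
      apply huniq γ hγI
      intro γ' hγ'
      calc f γ = f γstar := by rw [hγV, hVeq]
        _ ≤ f γ' := hmin γ' hγ'
    · rintro rfl
      exact ⟨hγstar, hVeq.symm⟩
  · -- no roots
    intro hV
    ext γ
    simp only [Set.mem_setOf_eq, Set.mem_empty_iff_false, iff_false, not_and]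
    intro hγI hγV
    have := hmin γ hγI
    rw [hγV] at this
    linarith
end

section
/- Complete root distribution in the mixed case with no zero-flow components (the edge case l = h + 1 of Equation (2) of the paper): let h ∈ {1, …, c−1}, suppose d_i < 0 for all i ≤ h and d_i > 0 for all i > h, and suppose V is strictly greater than the minimum of g over (α_h, α_{h+1}). Then the characteristic equation g(γ) = V has exactly c real solutions, distributed as follows: exactly one solution in each interval (α_i, α_{i+1}) for 1 ≤ i ≤ h−1, exactly two solutions in (α_h, α_{h+1}), exactly one solution in each interval (α_{i−1}, α_i) for h+2 ≤ i ≤ c, and no other real solutions. -/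
open Filter Set Topology Polynomial

lemma aux_inv_atTop (a : ℝ) : Tendsto (fun γ : ℝ => (γ - a)⁻¹) (𝓝[>] a) atTop := by
  have h1 : Tendsto (fun γ : ℝ => γ - a) (𝓝[>] a) (𝓝[>] (0:ℝ)) := by
    apply tendsto_nhdsWithin_of_tendsto_nhds_of_eventually_within
    · have : Tendsto (fun γ : ℝ => γ - a) (𝓝 a) (𝓝 (a - a)) :=
        (continuous_sub_right a).tendsto a
      simpa using this.mono_left (nhdsWithin_le_nhds (s := Set.Ioi a))
    · exact eventually_nhdsWithin_of_forall fun x hx => Set.mem_Ioi.mpr (sub_pos.mpr hx)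
  exact tendsto_inv_nhdsGT_zero.comp h1

lemma aux_inv_atBot (a : ℝ) : Tendsto (fun γ : ℝ => (γ - a)⁻¹) (𝓝[<] a) atBot := by
  have h1 : Tendsto (fun γ : ℝ => γ - a) (𝓝[<] a) (𝓝[<] (0:ℝ)) := by
    apply tendsto_nhdsWithin_of_tendsto_nhds_of_eventually_within
    · have : Tendsto (fun γ : ℝ => γ - a) (𝓝 a) (𝓝 (a - a)) :=
        (continuous_sub_right a).tendsto a
      simpa using this.mono_left (nhdsWithin_le_nhds (s := Set.Iio a))
    · exact eventually_nhdsWithin_of_forall fun x hx => by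
        simp only [Set.mem_Iio] at hx ⊢; linarith
  have h2 : Tendsto (fun x : ℝ => x⁻¹) (𝓝[<] (0:ℝ)) atBot := by
    have hneg : Tendsto (fun x : ℝ => -x) (𝓝[<] (0:ℝ)) (𝓝[>] (0:ℝ)) := by
      apply tendsto_nhdsWithin_of_tendsto_nhds_of_eventually_within
      · simpa using (continuous_neg.tendsto (0:ℝ)).mono_left
          (nhdsWithin_le_nhds (s := Set.Iio (0:ℝ)))
      · exact eventually_nhdsWithin_of_forall fun x hx => by
          simp only [Set.mem_Iio] at hx; simpa using hx
    have h3 : Tendsto (fun x : ℝ => -(-x)⁻¹) (𝓝[<] (0:ℝ)) atBot :=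
      tendsto_neg_atTop_atBot.comp (tendsto_inv_nhdsGT_zero.comp hneg)
    have : (fun x : ℝ => -(-x)⁻¹) = fun x : ℝ => x⁻¹ := by
      funext x; rw [inv_neg, neg_neg]
    rwa [this] at h3
  exact h2.comp h1


lemma exists_near_right {a b : ℝ} (hab : a < b) {P : ℝ → Prop} (h : ∀ᶠ x in 𝓝[>] a, P x) :
    ∃ x ∈ Set.Ioo a b, P x := by
  have h2 : Set.Ioo a b ∈ 𝓝[>] a := Ioo_mem_nhdsGT hab
  exact (h.and (eventually_of_mem h2 fun x hx => hx)).exists.imp fun x hx => ⟨hx.2, hx.1⟩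

lemma exists_near_left {a b : ℝ} (hab : a < b) {P : ℝ → Prop} (h : ∀ᶠ x in 𝓝[<] b, P x) :
    ∃ x ∈ Set.Ioo a b, P x := by
  have h2 : Set.Ioo a b ∈ 𝓝[<] b := Ioo_mem_nhdsLT hab
  exact (h.and (eventually_of_mem h2 fun x hx => hx)).exists.imp fun x hx => ⟨hx.2, hx.1⟩

lemma ivt_Ioo {f : ℝ → ℝ} {a b V : ℝ}
    (hf : ∀ x ∈ Set.Ioo a b, ContinuousAt f x) {x y : ℝ}
    (hx : x ∈ Set.Ioo a b) (hy : y ∈ Set.Ioo a b)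
    (hfx : f x < V) (hfy : V < f y) : ∃ z ∈ Set.Ioo a b, f z = V := by
  have hsub : Set.uIcc x y ⊆ Set.Ioo a b := Set.ordConnected_Ioo.uIcc_subset hx hy
  have hcont : ContinuousOn f (Set.uIcc x y) := fun z hz => (hf z (hsub hz)).continuousWithinAt
  have hV : V ∈ Set.uIcc (f x) (f y) := Set.mem_uIcc.mpr (Or.inl ⟨hfx.le, hfy.le⟩)
  obtain ⟨z, hz, hz2⟩ := intermediate_value_uIcc hcont hV
  exact ⟨z, hsub hz, hz2⟩

lemma ivt_end_right {f : ℝ → ℝ} {a t V : ℝ}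
    (hf : ∀ x ∈ Set.Ioc a t, ContinuousAt f x)
    {y : ℝ} (hy : y ∈ Set.Ioo a t) (hfy : V < f y) (hft : f t < V) :
    ∃ z ∈ Set.Ioo a t, f z = V := by
  have hat : a < t := hy.1.trans hy.2
  have hsub : Set.uIcc y t ⊆ Set.Ioc a t :=
    Set.ordConnected_Ioc.uIcc_subset ⟨hy.1, hy.2.le⟩ ⟨hat, le_refl t⟩
  have hcont : ContinuousOn f (Set.uIcc y t) := fun z hz => (hf z (hsub hz)).continuousWithinAt
  have hV : V ∈ Set.uIcc (f y) (f t) := Set.mem_uIcc.mpr (Or.inr ⟨hft.le, hfy.le⟩)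
  obtain ⟨z, hz, hz2⟩ := intermediate_value_uIcc hcont hV
  have hzt : z ≠ t := fun hzt => by rw [hzt] at hz2; exact absurd hz2 hft.ne
  exact ⟨z, ⟨(hsub hz).1, lt_of_le_of_ne (hsub hz).2 hzt⟩, hz2⟩

lemma ivt_end_left {f : ℝ → ℝ} {t b V : ℝ}
    (hf : ∀ x ∈ Set.Ico t b, ContinuousAt f x)
    {y : ℝ} (hy : y ∈ Set.Ioo t b) (hfy : V < f y) (hft : f t < V) :
    ∃ z ∈ Set.Ioo t b, f z = V := by
  have htb : t < b := hy.1.trans hy.2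
  have hsub : Set.uIcc t y ⊆ Set.Ico t b :=
    Set.ordConnected_Ico.uIcc_subset ⟨le_refl t, htb⟩ ⟨hy.1.le, hy.2⟩
  have hcont : ContinuousOn f (Set.uIcc t y) := fun z hz => (hf z (hsub hz)).continuousWithinAt
  have hV : V ∈ Set.uIcc (f t) (f y) := Set.mem_uIcc.mpr (Or.inl ⟨hft.le, hfy.le⟩)
  obtain ⟨z, hz, hz2⟩ := intermediate_value_uIcc hcont hV
  have hzt : z ≠ t := fun hzt => by rw [hzt] at hz2; exact absurd hz2 hft.ne
  exact ⟨z, ⟨lt_of_le_of_ne (hsub hz).1 (Ne.symm hzt), (hsub hz).2⟩, hz2⟩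

lemma secFun_decomp (c : ℕ) (α d : ℕ → ℝ) {k : ℕ} (hk : k ∈ Finset.Icc 1 c) (γ : ℝ) :
    secFun c α d γ = (-(α k * d k)) * (γ - α k)⁻¹ +
      ∑ j ∈ (Finset.Icc 1 c).erase k, α j * d j / (α j - γ) := by
  rw [secFun, ← Finset.add_sum_erase _ _ hk, div_eq_mul_inv,
    show α k - γ = -(γ - α k) by ring, inv_neg]
  ring

lemma secFun_continuousAt (c : ℕ) (α d : ℕ → ℝ) {γ : ℝ}
    (hγ : ∀ i ∈ Finset.Icc 1 c, γ ≠ α i) : ContinuousAt (secFun c α d) γ := by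
  unfold secFun ContinuousAt
  exact tendsto_finset_sum _ fun i hi =>
    continuousAt_const.div (continuousAt_const.sub continuousAt_id)
      (sub_ne_zero.mpr (Ne.symm (hγ i hi)))

lemma rest_continuousAt (c : ℕ) (α d : ℕ → ℝ) {k : ℕ}
    (hne : ∀ j ∈ (Finset.Icc 1 c).erase k, α j ≠ α k) :
    ContinuousAt (fun γ => ∑ j ∈ (Finset.Icc 1 c).erase k, α j * d j / (α j - γ)) (α k) := by
  unfold ContinuousAt
  exact tendsto_finset_sum _ fun j hj =>
    continuousAt_const.div (continuousAt_const.sub continuousAt_id)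
      (sub_ne_zero.mpr (hne j hj))

lemma pole_tendsto (c : ℕ) (α d : ℕ → ℝ) {k : ℕ} (hk : k ∈ Finset.Icc 1 c) (hαk : 0 < α k)
    (hne : ∀ j ∈ (Finset.Icc 1 c).erase k, α j ≠ α k) :
    (d k < 0 → Tendsto (secFun c α d) (𝓝[>] (α k)) atTop ∧
               Tendsto (secFun c α d) (𝓝[<] (α k)) atBot) ∧
    (0 < d k → Tendsto (secFun c α d) (𝓝[>] (α k)) atBot ∧
               Tendsto (secFun c α d) (𝓝[<] (α k)) atTop) := by
  set rest : ℝ → ℝ := fun γ => ∑ j ∈ (Finset.Icc 1 c).erase k, α j * d j / (α j - γ) with hrestdef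
  have hrest₁ : Tendsto rest (𝓝[>] (α k)) (𝓝 (rest (α k))) :=
    (rest_continuousAt c α d hne).tendsto.mono_left nhdsWithin_le_nhds
  have hrest₂ : Tendsto rest (𝓝[<] (α k)) (𝓝 (rest (α k))) :=
    (rest_continuousAt c α d hne).tendsto.mono_left nhdsWithin_le_nhds
  have hdec : ∀ γ, (-(α k * d k)) * (γ - α k)⁻¹ + rest γ = secFun c α d γ :=
    fun γ => (secFun_decomp c α d hk γ).symm
  constructor
  · intro hd
    have hC : 0 < -(α k * d k) := by nlinarith
    constructor
    · exact (((aux_inv_atTop (α k)).const_mul_atTop hC).atTop_add hrest₁).congr hdec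
    · exact (((aux_inv_atBot (α k)).const_mul_atBot hC).atBot_add hrest₂).congr hdec
  · intro hd
    have hC : -(α k * d k) < 0 := by nlinarith
    constructor
    · exact (((aux_inv_atTop (α k)).const_mul_atTop_of_neg hC).atBot_add hrest₁).congr hdec
    · exact (((aux_inv_atBot (α k)).const_mul_atBot_of_neg hC).atTop_add hrest₂).congr hdec

noncomputable def secPoly (c : ℕ) (α d : ℕ → ℝ) (V : ℝ) : Polynomial ℝ :=
  (∑ i ∈ Finset.Icc 1 c, Polynomial.C (α i * d i) *
      ∏ j ∈ (Finset.Icc 1 c).erase i, (Polynomial.C (α j) - Polynomial.X)) -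
    Polynomial.C V * ∏ j ∈ Finset.Icc 1 c, (Polynomial.C (α j) - Polynomial.X)

lemma secPoly_eval (c : ℕ) (α d : ℕ → ℝ) (V : ℝ) {γ : ℝ}
    (hγ : ∀ i ∈ Finset.Icc 1 c, γ ≠ α i) :
    (secPoly c α d V).eval γ = (secFun c α d γ - V) * ∏ j ∈ Finset.Icc 1 c, (α j - γ) := by
  have heval : (secPoly c α d V).eval γ =
      (∑ i ∈ Finset.Icc 1 c, (α i * d i) * ∏ j ∈ (Finset.Icc 1 c).erase i, (α j - γ)) -
        V * ∏ j ∈ Finset.Icc 1 c, (α j - γ) := by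
    simp [secPoly, eval_finset_sum, eval_prod]
  rw [heval, sub_mul, secFun, Finset.sum_mul]
  congr 1
  apply Finset.sum_congr rfl
  intro i hi
  have hne : α i - γ ≠ 0 := sub_ne_zero.mpr (Ne.symm (hγ i hi))
  rw [← Finset.mul_prod_erase _ _ hi, ← mul_assoc, div_mul_cancel₀ _ hne]

lemma secPoly_natDegree_le (c : ℕ) (α d : ℕ → ℝ) (V : ℝ) :
    (secPoly c α d V).natDegree ≤ c := by
  have hfac : ∀ (j : ℕ), (Polynomial.C (α j) - Polynomial.X).natDegree ≤ 1 := by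
    intro j
    refine (natDegree_sub_le _ _).trans ?_
    simp
  apply (natDegree_sub_le _ _).trans
  apply max_le
  · apply natDegree_sum_le_of_forall_le
    intro i hi
    apply (natDegree_mul_le).trans
    simp only [natDegree_C, zero_add]
    refine (natDegree_prod_le _ _).trans ?_
    have h1 := Finset.sum_le_card_nsmul ((Finset.Icc 1 c).erase i)
      (fun j => (Polynomial.C (α j) - Polynomial.X).natDegree) 1 (fun j _ => hfac j)
    simp only [smul_eq_mul, mul_one] at h1
    refine h1.trans ?_
    calc ((Finset.Icc 1 c).erase i).card ≤ (Finset.Icc 1 c).card :=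
        Finset.card_le_card (Finset.erase_subset _ _)
      _ = c := by simp
  · apply (natDegree_mul_le).trans
    simp only [natDegree_C, zero_add]
    refine (natDegree_prod_le _ _).trans ?_
    have h1 := Finset.sum_le_card_nsmul (Finset.Icc 1 c)
      (fun j => (Polynomial.C (α j) - Polynomial.X).natDegree) 1 (fun j _ => hfac j)
    simp only [smul_eq_mul, mul_one] at h1
    refine h1.trans ?_
    simp

/-- in the mixed case with no zero-flow components (`d_i < 0` for
`i ≤ h`, `d_i > 0` for `i > h`) and `V` strictly above the minimum of `g` over
`(α_h, α_{h+1})`, the characteristic equation has exactly `c` real solutions: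
one in each `(α_i, α_{i+1})` for `1 ≤ i ≤ h−1`, two in `(α_h, α_{h+1})`, one in
each `(α_{i−1}, α_i)` for `h+2 ≤ i ≤ c`, and no others. -/
theorem root_distribution_mixed_case
    (c : ℕ) (hc : 2 ≤ c) (α d : ℕ → ℝ)
    (hpos : ∀ i ∈ Finset.Icc 1 c, 0 < α i)
    (hmono : ∀ i ∈ Finset.Icc 1 c, ∀ j ∈ Finset.Icc 1 c, i < j → α i < α j)
    (h : ℕ) (hh1 : 1 ≤ h) (hh2 : h ≤ c - 1)
    (hdneg : ∀ i ∈ Finset.Icc 1 h, d i < 0)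
    (hdpos : ∀ i ∈ Finset.Icc (h + 1) c, 0 < d i)
    (γstar : ℝ) (hγstar : γstar ∈ Set.Ioo (α h) (α (h + 1)))
    (hmin : ∀ γ ∈ Set.Ioo (α h) (α (h + 1)), secFun c α d γstar ≤ secFun c α d γ)
    (V : ℝ) (hV : secFun c α d γstar < V) :
    {γ : ℝ | (∀ i ∈ Finset.Icc 1 c, γ ≠ α i) ∧ secFun c α d γ = V}.ncard = c ∧
    (∀ i ∈ Finset.Icc 1 (h - 1),
      ∃! γ : ℝ, γ ∈ Set.Ioo (α i) (α (i + 1)) ∧ secFun c α d γ = V) ∧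
    (∃ γ₁ γ₂ : ℝ, γ₁ ≠ γ₂ ∧
      {γ : ℝ | γ ∈ Set.Ioo (α h) (α (h + 1)) ∧ secFun c α d γ = V} = {γ₁, γ₂}) ∧
    (∀ i ∈ Finset.Icc (h + 2) c,
      ∃! γ : ℝ, γ ∈ Set.Ioo (α (i - 1)) (α i) ∧ secFun c α d γ = V) ∧
    (∀ γ : ℝ, (∀ i ∈ Finset.Icc 1 c, γ ≠ α i) → secFun c α d γ = V →
      (∃ i ∈ Finset.Icc 1 (h - 1), γ ∈ Set.Ioo (α i) (α (i + 1))) ∨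
      γ ∈ Set.Ioo (α h) (α (h + 1)) ∨
      (∃ i ∈ Finset.Icc (h + 2) c, γ ∈ Set.Ioo (α (i - 1)) (α i))) := by
  have hh2' : h + 1 ≤ c := by omega
  have hmlt : ∀ i j : ℕ, 1 ≤ i → i < j → j ≤ c → α i < α j := by
    intro i j h1 h2 h3
    exact hmono i (Finset.mem_Icc.mpr ⟨h1, by omega⟩) j (Finset.mem_Icc.mpr ⟨by omega, h3⟩) h2
  have hmle : ∀ i j : ℕ, 1 ≤ i → i ≤ j → j ≤ c → α i ≤ α j := by
    intro i j h1 h2 h3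
    rcases eq_or_lt_of_le h2 with rfl | hlt
    · exact le_refl _
    · exact (hmlt i j h1 hlt h3).le
  have hnoteq : ∀ m : ℕ, 1 ≤ m → m + 1 ≤ c → ∀ x ∈ Set.Ioo (α m) (α (m+1)),
      ∀ i ∈ Finset.Icc 1 c, x ≠ α i := by
    intro m hm1 hm2 x hx i hi
    rw [Finset.mem_Icc] at hi
    rcases le_or_gt i m with hle | hgt
    · exact ne_of_gt (lt_of_le_of_lt (hmle i m hi.1 hle (by omega)) hx.1)
    · exact ne_of_lt (lt_of_lt_of_le hx.2 (hmle (m+1) i (by omega) (by omega) hi.2))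
  have hcontIoo : ∀ m : ℕ, 1 ≤ m → m + 1 ≤ c → ∀ x ∈ Set.Ioo (α m) (α (m+1)),
      ContinuousAt (secFun c α d) x := fun m hm1 hm2 x hx =>
    secFun_continuousAt c α d (hnoteq m hm1 hm2 x hx)
  have hpole : ∀ k : ℕ, 1 ≤ k → k ≤ c →
      (d k < 0 → Tendsto (secFun c α d) (𝓝[>] (α k)) atTop ∧
                 Tendsto (secFun c α d) (𝓝[<] (α k)) atBot) ∧
      (0 < d k → Tendsto (secFun c α d) (𝓝[>] (α k)) atBot ∧
                 Tendsto (secFun c α d) (𝓝[<] (α k)) atTop) := by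
    intro k h1 h2
    have hk : k ∈ Finset.Icc 1 c := Finset.mem_Icc.mpr ⟨h1, h2⟩
    refine pole_tendsto c α d hk (hpos k hk) ?_
    intro j hj
    rw [Finset.mem_erase] at hj
    have hj' := Finset.mem_Icc.mp hj.2
    rcases lt_or_gt_of_ne hj.1 with hlt | hgt
    · exact ne_of_lt (hmlt j k hj'.1 hlt h2)
    · exact ne_of_gt (hmlt k j h1 hgt hj'.2)
  have hexL : ∀ j ∈ Finset.Icc 1 (h-1),
      ∃ x, x ∈ Set.Ioo (α j) (α (j+1)) ∧ secFun c α d x = V := by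
    intro j hj
    rw [Finset.mem_Icc] at hj
    have hj1 : (1:ℕ) ≤ j := hj.1
    have hab : α j < α (j+1) := hmlt j (j+1) hj1 (by omega) (by omega)
    have hTop := ((hpole j hj1 (by omega)).1 (hdneg j (Finset.mem_Icc.mpr ⟨hj1, by omega⟩))).1
    have hBot := ((hpole (j+1) (by omega) (by omega)).1
      (hdneg (j+1) (Finset.mem_Icc.mpr ⟨by omega, by omega⟩))).2
    obtain ⟨y, hy, hyV⟩ := exists_near_right hab (hTop.eventually (eventually_gt_atTop V))
    obtain ⟨x, hx, hxV⟩ := exists_near_left hab (hBot.eventually (eventually_lt_atBot V))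
    obtain ⟨z, hz, hzV⟩ := ivt_Ioo (hcontIoo j hj1 (by omega)) hx hy hxV hyV
    exact ⟨z, hz, hzV⟩
  have hγ1 : α h < γstar := hγstar.1
  have hγ2 : γstar < α (h+1) := hγstar.2
  have hdh : d h < 0 := hdneg h (Finset.mem_Icc.mpr ⟨hh1, le_refl h⟩)
  have hdh1 : 0 < d (h+1) := hdpos (h+1) (Finset.mem_Icc.mpr ⟨le_refl _, hh2'⟩)
  have hexM1 : ∃ x, x ∈ Set.Ioo (α h) γstar ∧ secFun c α d x = V := by
    have hTop := ((hpole h hh1 (by omega)).1 hdh).1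
    obtain ⟨y, hy, hyV⟩ := exists_near_right hγ1 (hTop.eventually (eventually_gt_atTop V))
    obtain ⟨z, hz, hzV⟩ := ivt_end_right (f := secFun c α d) (t := γstar)
      (fun x hx => hcontIoo h hh1 hh2' x ⟨hx.1, lt_of_le_of_lt hx.2 hγ2⟩) hy hyV hV
    exact ⟨z, hz, hzV⟩
  have hexM2 : ∃ x, x ∈ Set.Ioo γstar (α (h+1)) ∧ secFun c α d x = V := by
    have hTop := ((hpole (h+1) (by omega) hh2').2 hdh1).2
    obtain ⟨y, hy, hyV⟩ := exists_near_left hγ2 (hTop.eventually (eventually_gt_atTop V))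
    obtain ⟨z, hz, hzV⟩ := ivt_end_left (f := secFun c α d) (t := γstar)
      (fun x hx => hcontIoo h hh1 hh2' x ⟨lt_of_lt_of_le hγ1 hx.1, hx.2⟩) hy hyV hV
    exact ⟨z, hz, hzV⟩
  have hexR : ∀ j ∈ Finset.Icc (h+2) c,
      ∃ x, x ∈ Set.Ioo (α (j-1)) (α j) ∧ secFun c α d x = V := by
    intro j hj
    rw [Finset.mem_Icc] at hj
    have hab : α (j-1) < α j := hmlt (j-1) j (by omega) (by omega) hj.2
    have hBot := ((hpole (j-1) (by omega) (by omega)).2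
      (hdpos (j-1) (Finset.mem_Icc.mpr ⟨by omega, by omega⟩))).1
    have hTop := ((hpole j (by omega) hj.2).2
      (hdpos j (Finset.mem_Icc.mpr ⟨by omega, hj.2⟩))).2
    obtain ⟨x, hx, hxV⟩ := exists_near_right hab (hBot.eventually (eventually_lt_atBot V))
    obtain ⟨y, hy, hyV⟩ := exists_near_left hab (hTop.eventually (eventually_gt_atTop V))
    have hcont := hcontIoo (j-1) (by omega) (by omega)
    rw [show j - 1 + 1 = j by omega] at hcont
    obtain ⟨z, hz, hzV⟩ := ivt_Ioo hcont hx hy hxV hyV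
    exact ⟨z, hz, hzV⟩
  choose! xL hxL1 hxL2 using hexL
  obtain ⟨xM1, hM1a, hM1b⟩ := hexM1
  obtain ⟨xM2, hM2a, hM2b⟩ := hexM2
  choose! xR hxR1 hxR2 using hexR
  set r : ℕ → ℝ := fun j =>
    if j + 1 ≤ h then xL j else if j = h then xM1 else if j = h+1 then xM2 else xR j with hrdef
  set lo : ℕ → ℕ := fun j => if j ≤ h then j else j - 1 with hlodef
  have hlo1 : ∀ j, j ≤ h → lo j = j := by
    intro j hj; simp only [hlodef]; rw [if_pos hj]
  have hlo2 : ∀ j, ¬ j ≤ h → lo j = j - 1 := by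
    intro j hj; simp only [hlodef]; rw [if_neg hj]
  have hrh : r h = xM1 := by
    simp only [hrdef]; rw [if_neg (by omega)]; simp
  have hrh1 : r (h+1) = xM2 := by
    simp only [hrdef]; rw [if_neg (by omega), if_neg (by omega)]; simp
  have hlole : ∀ j, 1 ≤ j → j ≤ c → 1 ≤ lo j ∧ lo j + 1 ≤ c := by
    intro j h1 h2
    by_cases hj : j ≤ h
    · rw [hlo1 j hj]; omega
    · rw [hlo2 j hj]; omega
  have hrmem : ∀ j, 1 ≤ j → j ≤ c →
      r j ∈ Set.Ioo (α (lo j)) (α (lo j + 1)) ∧ secFun c α d (r j) = V := by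
    intro j h1 h2
    by_cases hj1 : j + 1 ≤ h
    · have hjm : j ∈ Finset.Icc 1 (h-1) := Finset.mem_Icc.mpr ⟨h1, by omega⟩
      have e1 : r j = xL j := by simp only [hrdef]; rw [if_pos hj1]
      have e2 : lo j = j := hlo1 j (by omega)
      rw [e1, e2]
      exact ⟨hxL1 j hjm, hxL2 j hjm⟩
    · by_cases hj2 : j = h
      · have e1 : r j = xM1 := by rw [hj2, hrh]
        have e2 : lo j = j := hlo1 j (by omega)
        rw [e1, e2, hj2]
        exact ⟨⟨hM1a.1, hM1a.2.trans hγ2⟩, hM1b⟩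
      · by_cases hj3 : j = h + 1
        · have e1 : r j = xM2 := by rw [hj3, hrh1]
          have e2 : lo j = h := by rw [hlo2 j (by omega)]; omega
          rw [e1, e2]
          exact ⟨⟨hγ1.trans hM2a.1, hM2a.2⟩, hM2b⟩
        · have hjm : j ∈ Finset.Icc (h+2) c := Finset.mem_Icc.mpr ⟨by omega, h2⟩
          have e1 : r j = xR j := by
            simp only [hrdef]; rw [if_neg (by omega), if_neg hj2, if_neg hj3]
          have e2 : lo j = j - 1 := hlo2 j (by omega)
          rw [e1, e2, show j - 1 + 1 = j by omega]
          exact ⟨hxR1 j hjm, hxR2 j hjm⟩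
  have hrlt : ∀ j j', 1 ≤ j → j' ≤ c → j < j' → r j < r j' := by
    intro j j' h1 h2 hlt
    have hm := hrmem j h1 (by omega)
    have hm' := hrmem j' (by omega) h2
    by_cases hll : lo j < lo j'
    · have hb1 := hlole j h1 (by omega)
      have hb2 := hlole j' (by omega) h2
      calc r j < α (lo j + 1) := hm.1.2
        _ ≤ α (lo j') := hmle (lo j + 1) (lo j') (by omega) (by omega) (by omega)
        _ < r j' := hm'.1.1
    · have hjh : j = h ∧ j' = h + 1 := by
        by_cases e1 : j ≤ h
        · by_cases e2 : j' ≤ h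
          · rw [hlo1 j e1, hlo1 j' e2] at hll; omega
          · rw [hlo1 j e1, hlo2 j' e2] at hll; omega
        · by_cases e2 : j' ≤ h
          · rw [hlo2 j e1, hlo1 j' e2] at hll; omega
          · rw [hlo2 j e1, hlo2 j' e2] at hll; omega
      rw [hjh.1, hjh.2, hrh, hrh1]
      exact hM1a.2.trans hM2a.1
  have hrinj : ∀ j j', 1 ≤ j → j ≤ c → 1 ≤ j' → j' ≤ c → r j = r j' → j = j' := by
    intro j j' a1 a2 a3 a4 heq
    rcases lt_trichotomy j j' with hlt | he | hgt
    · exact absurd heq (hrlt j j' a1 a4 hlt).ne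
    · exact he
    · exact absurd heq.symm (hrlt j' j a3 a2 hgt).ne
  have hγstar_ne : ∀ i ∈ Finset.Icc 1 c, γstar ≠ α i := hnoteq h hh1 hh2' γstar hγstar
  have hP0 : secPoly c α d V ≠ 0 := by
    intro h0
    have he := secPoly_eval c α d V hγstar_ne
    rw [h0] at he
    simp only [Polynomial.eval_zero] at he
    have hprod : ∏ j ∈ Finset.Icc 1 c, (α j - γstar) ≠ 0 := by
      rw [Finset.prod_ne_zero_iff]
      intro i hi
      exact sub_ne_zero.mpr (Ne.symm (hγstar_ne i hi))
    exact (mul_ne_zero (sub_ne_zero.mpr hV.ne) hprod) he.symm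
  set S : Set ℝ := {γ : ℝ | (∀ i ∈ Finset.Icc 1 c, γ ≠ α i) ∧ secFun c α d γ = V} with hSdef
  have hSsub : S ⊆ ((secPoly c α d V).roots.toFinset : Set ℝ) := by
    intro γ hγ
    rw [Finset.mem_coe, Multiset.mem_toFinset, Polynomial.mem_roots']
    refine ⟨hP0, ?_⟩
    show (secPoly c α d V).eval γ = 0
    rw [secPoly_eval c α d V hγ.1, hγ.2, sub_self, zero_mul]
  have hfin : S.Finite := Set.Finite.subset (Finset.finite_toSet _) hSsub
  have hcard_le : S.ncard ≤ c := by
    have h1 : S.ncard ≤ ((secPoly c α d V).roots.toFinset : Finset ℝ).card := by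
      rw [← Set.ncard_coe_finset]
      exact Set.ncard_le_ncard hSsub (Finset.finite_toSet _)
    refine h1.trans ((Multiset.toFinset_card_le _).trans ?_)
    exact ((secPoly c α d V).card_roots').trans (secPoly_natDegree_le c α d V)
  set T : Finset ℝ := (Finset.Icc 1 c).image r with hTdef
  have hinjT : Set.InjOn r ↑(Finset.Icc 1 c) := by
    intro a ha b hb heq
    rw [Finset.mem_coe, Finset.mem_Icc] at ha hb
    exact hrinj a b ha.1 ha.2 hb.1 hb.2 heq
  have hTcard : T.card = c := by
    rw [hTdef, Finset.card_image_of_injOn hinjT, Nat.card_Icc]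
    omega
  have hTsubS : ↑T ⊆ S := by
    intro x hx
    rw [hTdef] at hx
    simp only [Finset.coe_image, Set.mem_image, Finset.mem_coe, Finset.mem_Icc] at hx
    obtain ⟨j, ⟨hj1, hj2⟩, rfl⟩ := hx
    have hm := hrmem j hj1 hj2
    have hlo := hlole j hj1 hj2
    exact ⟨hnoteq (lo j) hlo.1 hlo.2 (r j) hm.1, hm.2⟩
  have hST : ↑T = S := Set.eq_of_subset_of_ncard_le hTsubS
    (by rw [Set.ncard_coe_finset, hTcard]; exact hcard_le) hfin
  have hclass : ∀ γ ∈ S, ∃ j, 1 ≤ j ∧ j ≤ c ∧ γ = r j := by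
    intro γ hγ
    rw [← hST] at hγ
    simp only [hTdef, Finset.coe_image, Set.mem_image, Finset.mem_coe, Finset.mem_Icc] at hγ
    obtain ⟨j, ⟨hj1, hj2⟩, hr⟩ := hγ
    exact ⟨j, hj1, hj2, hr.symm⟩
  have hdisj : ∀ m m' : ℕ, 1 ≤ m → m + 1 ≤ c → 1 ≤ m' → m' + 1 ≤ c → ∀ x : ℝ,
      x ∈ Set.Ioo (α m) (α (m+1)) → x ∈ Set.Ioo (α m') (α (m'+1)) → m = m' := by
    intro m m' a1 a2 a3 a4 x hx hx'
    rcases lt_trichotomy m m' with hlt | he | hgt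
    · have hle : α (m+1) ≤ α m' := hmle (m+1) m' (by omega) (by omega) (by omega)
      exact absurd ((hx.2.trans_le hle).trans hx'.1) (lt_irrefl x)
    · exact he
    · have hle : α (m'+1) ≤ α m := hmle (m'+1) m (by omega) (by omega) (by omega)
      exact absurd ((hx'.2.trans_le hle).trans hx.1) (lt_irrefl x)
  refine ⟨?_, ?_, ?_, ?_, ?_⟩
  · rw [← hST, Set.ncard_coe_finset, hTcard]
  · intro i hi
    rw [Finset.mem_Icc] at hi
    have hi1 : 1 ≤ i := hi.1
    have hic : i + 1 ≤ c := by omega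
    have hloi : lo i = i := hlo1 i (by omega)
    have hm := hrmem i hi1 (by omega)
    rw [hloi] at hm
    refine ⟨r i, ⟨hm.1, hm.2⟩, ?_⟩
    rintro y ⟨hy1, hy2⟩
    have hyS : y ∈ S := ⟨hnoteq i hi1 hic y hy1, hy2⟩
    obtain ⟨j, hj1, hj2, heqy⟩ := hclass y hyS
    have hmj := hrmem j hj1 hj2
    have hloj := hlole j hj1 hj2
    have heq : lo j = i := hdisj (lo j) i hloj.1 hloj.2 hi1 hic y (heqy ▸ hmj.1) hy1
    have hji : j = i := by
      by_cases e1 : j ≤ h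
      · rw [hlo1 j e1] at heq; omega
      · rw [hlo2 j e1] at heq; omega
    rw [heqy, hji]
  · refine ⟨xM1, xM2, (hM1a.2.trans hM2a.1).ne, ?_⟩
    ext y
    simp only [Set.mem_setOf_eq, Set.mem_insert_iff, Set.mem_singleton_iff]
    constructor
    · rintro ⟨hy1, hy2⟩
      have hyS : y ∈ S := ⟨hnoteq h hh1 hh2' y hy1, hy2⟩
      obtain ⟨j, hj1, hj2, heqy⟩ := hclass y hyS
      have hmj := hrmem j hj1 hj2
      have hloj := hlole j hj1 hj2
      have heq : lo j = h := hdisj (lo j) h hloj.1 hloj.2 hh1 hh2' y (heqy ▸ hmj.1) hy1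
      have hj : j = h ∨ j = h + 1 := by
        by_cases e1 : j ≤ h
        · rw [hlo1 j e1] at heq; omega
        · rw [hlo2 j e1] at heq; omega
      rcases hj with rfl | rfl
      · left; rw [heqy, hrh]
      · right; rw [heqy, hrh1]
    · rintro (rfl | rfl)
      · exact ⟨⟨hM1a.1, hM1a.2.trans hγ2⟩, hM1b⟩
      · exact ⟨⟨hγ1.trans hM2a.1, hM2a.2⟩, hM2b⟩
  · intro i hi
    rw [Finset.mem_Icc] at hi
    have e1 : i - 1 + 1 = i := by omega
    have hm := hrmem i (by omega) hi.2
    have hloi : lo i = i - 1 := hlo2 i (by omega)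
    rw [hloi, e1] at hm
    refine ⟨r i, ⟨hm.1, hm.2⟩, ?_⟩
    rintro y ⟨hy1, hy2⟩
    have hy1' : y ∈ Set.Ioo (α (i-1)) (α (i-1+1)) := by rw [e1]; exact hy1
    have hyS : y ∈ S := ⟨hnoteq (i-1) (by omega) (by omega) y hy1', hy2⟩
    obtain ⟨j, hj1, hj2, heqy⟩ := hclass y hyS
    have hmj := hrmem j hj1 hj2
    have hloj := hlole j hj1 hj2
    have heq : lo j = i - 1 := hdisj (lo j) (i-1) hloj.1 hloj.2 (by omega) (by omega) y
      (heqy ▸ hmj.1) hy1'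
    have hji : j = i := by
      by_cases e2 : j ≤ h
      · rw [hlo1 j e2] at heq; omega
      · rw [hlo2 j e2] at heq; omega
    rw [heqy, hji]
  · intro γ hγa hγb
    have hγS : γ ∈ S := ⟨hγa, hγb⟩
    obtain ⟨j, hj1, hj2, heqy⟩ := hclass γ hγS
    have hmj := hrmem j hj1 hj2
    by_cases e1 : j + 1 ≤ h
    · left
      refine ⟨j, Finset.mem_Icc.mpr ⟨hj1, by omega⟩, ?_⟩
      have hlj : lo j = j := hlo1 j (by omega)
      have hmm := hmj.1
      rw [hlj] at hmm
      rw [heqy]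
      exact hmm
    · by_cases e2 : j ≤ h + 1
      · right; left
        have hlj : lo j = h := by
          by_cases e3 : j ≤ h
          · rw [hlo1 j e3]; omega
          · rw [hlo2 j e3]; omega
        have hmm := hmj.1
        rw [hlj] at hmm
        rw [heqy]
        exact hmm
      · right; right
        refine ⟨j, Finset.mem_Icc.mpr ⟨by omega, hj2⟩, ?_⟩
        have hlj : lo j = j - 1 := hlo2 j (by omega)
        have hmm := hmj.1
        rw [hlj, show j - 1 + 1 = j by omega] at hmm
        rw [heqy]
        exact hmm
end
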